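/- arXiv:2503.10295 — 2 statements merged into one kernel-verified Lean document; each statement's English description precedes it below -/
import Mathlib

section
/- Let D be a semicomplete digraph, let T be any spanning tournament of D (a spanning subdigraph with exactly one arc between every pair of distinct vertices), and let u be a vertex of maximum in-degree in T. Then u is a nearly in-dominating vertex of D: for every natural number c, all but at most 2c vertices of D are c-good for u in D. -/
/-- A simple digraph: an irreflexive adjacency relation (no loops, no parallel arcs). -/
structure Digr (V : Type) where
  Adj : V → V → Prop
  irrefl : ∀ v, ¬ Adj v v

namespace Digr

variable {V : Type}

/-- `p` is a directed path (as a list of distinct vertices) from `x` to `y`. -/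
def IsPathFrom (G : Digr V) (p : List V) (x y : V) : Prop :=
  p.head? = some x ∧ p.getLast? = some y ∧ p.Chain' G.Adj ∧ p.Nodup

/-- A path from `x` to `y` all of whose vertices lie in `A`. -/
def IsPathOn (G : Digr V) (A : Set V) (p : List V) (x y : V) : Prop :=
  G.IsPathFrom p x y ∧ ∀ v ∈ p, v ∈ A

/-- The digraph restricted to `A` is strongly connected. -/
def StronglyConnectedOn (G : Digr V) (A : Set V) : Prop :=
  ∀ x ∈ A, ∀ y ∈ A, x ≠ y → ∃ p, G.IsPathOn A p x y

/-- A digraph is strong if every ordered pair of distinct vertices is joined by a path. -/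
def IsStrong (G : Digr V) : Prop :=
  ∀ x y : V, x ≠ y → ∃ p, G.IsPathFrom p x y

/-- `G` is `k`-strong: at least `k+1` vertices, and deleting any at most `k-1`
vertices leaves a strongly connected digraph. -/
def KStrong [Fintype V] (G : Digr V) (k : ℕ) : Prop :=
  k + 1 ≤ Fintype.card V ∧
  ∀ S : Finset V, S.card ≤ k - 1 → G.StronglyConnectedOn ((↑S : Set V)ᶜ)

/-- `G` is `k`-linked. -/
def KLinked [Fintype V] (G : Digr V) (k : ℕ) : Prop :=
  2 * k ≤ Fintype.card V ∧
  ∀ x y : Fin k → V, Function.Injective (Sum.elim x y) →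
    ∃ P : Fin k → List V,
      (∀ i, G.IsPathFrom (P i) (x i) (y i)) ∧
      (∀ i j, i ≠ j → ∀ v, v ∈ P i → v ∉ P j)

/-- Semicomplete: at least one arc between any two distinct vertices. -/
def Semicomplete (G : Digr V) : Prop :=
  ∀ x y : V, x ≠ y → G.Adj x y ∨ G.Adj y x

/-- Out-degree of a vertex. -/
noncomputable def outDeg [Fintype V] (G : Digr V) (v : V) : ℕ :=
  Set.ncard {w | G.Adj v w}

/-- In-degree of a vertex. -/
noncomputable def inDeg [Fintype V] (G : Digr V) (v : V) : ℕ :=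
  Set.ncard {w | G.Adj w v}

/-- `G` together with the surjection `φ : V → ι` realizes a composition `H[S₁,…,S_h]`:
between distinct parts, the arcs of `G` are exactly those prescribed by `H`. -/
def IsCompositionOver {ι : Type} (G : Digr V) (H : Digr ι) (φ : V → ι) : Prop :=
  Function.Surjective φ ∧ ∀ u v : V, φ u ≠ φ v → (G.Adj u v ↔ H.Adj (φ u) (φ v))

end Digr


namespace Digr

/-- `v` is c-good for `u` in `G`: either the arc vu is present, or there are at
least c independent (v,u)-paths of length 2 (i.e. c distinct midpoints m with
arcs vm and mu). -/
def CGood {V : Type} (G : Digr V) (c : ℕ) (v u : V) : Prop :=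
  G.Adj v u ∨ ∃ M : Finset V, c ≤ M.card ∧ ∀ m ∈ M, G.Adj v m ∧ G.Adj m u

/-- A tournament: exactly one arc between any two distinct vertices. -/
def IsTournament {V : Type} (T : Digr V) : Prop :=
  ∀ u v : V, u ≠ v → (T.Adj u v ↔ ¬ T.Adj v u)

end Digr

/-!
Let `N` be the in-neighbourhood of `u` in `T`. A vertex `v ≠ u` that is not `c`-good for `u`
is not an in-neighbour of `u` in `G`, hence an out-neighbour of `u` in `T`, and fewer than `c`
vertices of `N` are out-neighbours of `v`. The in-neighbourhood of `v` in `T` contains `u`,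
the rest of `N`, and the in-neighbours of `v` among the other bad vertices; as it is no larger
than `N`, `v` has at most `c - 2` in-neighbours among the `b` bad vertices other than `u`.
But a tournament on `b ≥ 1` vertices has a vertex of in-degree at least `(b - 1) / 2`, so
`b ≤ 2c - 3`, and at most `2c - 2` vertices are not `c`-good for `u`.
-/

open Finset

namespace Digr

variable {V : Type}

lemma cGood_zero (G : Digr V) (v u : V) : G.CGood 0 v u :=
  Or.inr ⟨∅, le_rfl, by simp⟩

lemma not_adj_of_not_cGood {G : Digr V} {c : ℕ} {v u : V} (h : ¬ G.CGood c v u) :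
    ¬ G.Adj v u :=
  fun hvu => h (Or.inl hvu)

lemma IsTournament.adj_of_not_adj {T : Digr V} (hT : T.IsTournament) {u v : V} (huv : u ≠ v)
    (h : ¬ T.Adj v u) : T.Adj u v :=
  (hT u v huv).2 h

variable [Fintype V]

open scoped Classical in
noncomputable def inNbhd (G : Digr V) (v : V) : Finset V := {w | G.Adj w v}

open scoped Classical in
noncomputable def outNbhd (G : Digr V) (v : V) : Finset V := {w | G.Adj v w}

@[simp] lemma mem_inNbhd {G : Digr V} {v w : V} : w ∈ G.inNbhd v ↔ G.Adj w v := by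
  simp [inNbhd]

@[simp] lemma mem_outNbhd {G : Digr V} {v w : V} : w ∈ G.outNbhd v ↔ G.Adj v w := by
  simp [outNbhd]

lemma inDeg_eq_card_inNbhd (G : Digr V) (v : V) : G.inDeg v = #(G.inNbhd v) := by
  rw [inDeg, ← Set.ncard_coe_finset]
  congr
  ext
  simp

lemma inNbhd_mono {G H : Digr V} (h : ∀ a b, H.Adj a b → G.Adj a b) (v : V) :
    H.inNbhd v ⊆ G.inNbhd v :=
  fun _ hw => mem_inNbhd.2 (h _ _ (mem_inNbhd.1 hw))

lemma outNbhd_mono {G H : Digr V} (h : ∀ a b, H.Adj a b → G.Adj a b) (v : V) :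
    H.outNbhd v ⊆ G.outNbhd v :=
  fun _ hw => mem_outNbhd.2 (h _ _ (mem_outNbhd.1 hw))

variable [DecidableEq V]

lemma card_inNbhd_inter_outNbhd_lt_of_not_cGood {G : Digr V} {c : ℕ} {v u : V}
    (h : ¬ G.CGood c v u) : #(G.inNbhd u ∩ G.outNbhd v) < c := by
  by_contra! hc
  exact h (Or.inr ⟨_, hc, fun m hm => by simpa [and_comm] using hm⟩)

namespace IsTournament

variable {T : Digr V} (hT : T.IsTournament)
include hT

lemma card_inter_inNbhd_add_card_inter_outNbhd (S : Finset V) (v : V) :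
    #(S ∩ T.inNbhd v) + #(S ∩ T.outNbhd v) = #(S.erase v) := by
  rw [← card_union_of_disjoint]
  · congr 1
    ext w
    by_cases hwv : w = v
    · simp [hwv, T.irrefl]
    · have := hT w v hwv
      simp only [mem_union, mem_inter, mem_inNbhd, mem_outNbhd, mem_erase]
      tauto
  · refine disjoint_left.2 fun w hw hw' => ?_
    simp only [mem_inter, mem_inNbhd, mem_outNbhd] at hw hw'
    have hwv : w ≠ v := by rintro rfl; exact T.irrefl w hw.2
    exact (hT w v hwv).1 hw.2 hw'.2

lemma two_mul_sum_card_inter_inNbhd (B : Finset V) :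
    2 * ∑ v ∈ B, #(B ∩ T.inNbhd v) = #B * (#B - 1) := by
  have hswap : ∑ v ∈ B, #(B ∩ T.outNbhd v) = ∑ v ∈ B, #(B ∩ T.inNbhd v) := by
    classical
    have hout (v : V) : B ∩ T.outNbhd v = {w ∈ B | T.Adj v w} := by ext; simp
    have hin (v : V) : B ∩ T.inNbhd v = {w ∈ B | T.Adj w v} := by ext; simp
    simp only [hout, hin]
    exact sum_card_bipartiteAbove_eq_sum_card_bipartiteBelow T.Adj
  calc 2 * ∑ v ∈ B, #(B ∩ T.inNbhd v)
      = ∑ v ∈ B, (#(B ∩ T.inNbhd v) + #(B ∩ T.outNbhd v)) := by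
        rw [sum_add_distrib, hswap, two_mul]
    _ = ∑ _v ∈ B, (#B - 1) := sum_congr rfl fun v hv => by
        rw [hT.card_inter_inNbhd_add_card_inter_outNbhd, card_erase_of_mem hv]
    _ = #B * (#B - 1) := by rw [sum_const, smul_eq_mul]

lemma exists_card_le_two_mul_card_inter_inNbhd_add_one {B : Finset V} (hB : B.Nonempty) :
    ∃ v ∈ B, #B ≤ 2 * #(B ∩ T.inNbhd v) + 1 := by
  obtain ⟨v, hv, hle⟩ := exists_le_of_sum_le hB (f := fun _ => #B - 1)
    (g := fun v => 2 * #(B ∩ T.inNbhd v)) (by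
      rw [sum_const, smul_eq_mul, ← mul_sum, hT.two_mul_sum_card_inter_inNbhd])
  exact ⟨v, hv, by omega⟩

lemma card_inter_inNbhd_lt_of_max_inDeg {u v : V} (hmax : ∀ w, T.inDeg w ≤ T.inDeg u)
    (huv : T.Adj u v) {B : Finset V} (hBu : Disjoint B (T.inNbhd u)) (huB : u ∉ B) :
    #(B ∩ T.inNbhd v) < #(T.inNbhd u ∩ T.outNbhd v) := by
  have hdeg := hmax v
  rw [inDeg_eq_card_inNbhd, inDeg_eq_card_inNbhd] at hdeg
  set N := T.inNbhd u
  have hvN : v ∉ N := fun h =>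
    (hT u v (by rintro rfl; exact T.irrefl u huv)).1 huv (mem_inNbhd.1 h)
  have hsplit := hT.card_inter_inNbhd_add_card_inter_outNbhd N v
  rw [erase_eq_of_notMem hvN] at hsplit
  have hsub : N ∩ T.inNbhd v ∪ insert u (B ∩ T.inNbhd v) ⊆ T.inNbhd v := by
    simp [union_subset_iff, insert_subset_iff, huv]
  have hdisj : Disjoint (N ∩ T.inNbhd v) (insert u (B ∩ T.inNbhd v)) := by
    rw [disjoint_insert_right]
    exact ⟨fun h => T.irrefl u (mem_inNbhd.1 (mem_inter.1 h).1),
      disjoint_of_subset_left inter_subset_left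
        (disjoint_of_subset_right inter_subset_left hBu.symm)⟩
  have hcard := card_le_card hsub
  rw [card_union_of_disjoint hdisj, card_insert_of_notMem fun h => huB (mem_inter.1 h).1] at hcard
  omega

end IsTournament

end Digr

open Digr

theorem max_in_degree_is_nearly_in_dominating_general {V : Type} [Fintype V]
    (G T : Digr V)
    (hsub : ∀ u v : V, T.Adj u v → G.Adj u v)
    (htour : T.IsTournament)
    (u : V) (hmax : ∀ w : V, T.inDeg w ≤ T.inDeg u) :
    ∀ c : ℕ, Set.ncard {v : V | ¬ G.CGood c v u} ≤ 2 * c := by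
  classical
  intro c
  obtain rfl | hc := c.eq_zero_or_pos
  · simp [cGood_zero]
  set Bad : Finset V := {v | ¬ G.CGood c v u}
  rw [show {v | ¬ G.CGood c v u} = (Bad : Set V) by simp [Bad], Set.ncard_coe_finset]
  set B := Bad.erase u
  have hBu : Disjoint B (T.inNbhd u) := disjoint_left.2 fun w hw hwu =>
    not_adj_of_not_cGood (mem_filter.1 (mem_of_mem_erase hw)).2 (hsub _ _ (mem_inNbhd.1 hwu))
  have key : ∀ v ∈ B, #(B ∩ T.inNbhd v) + 2 ≤ c := by
    intro v hv
    have hbad : ¬ G.CGood c v u := (mem_filter.1 (mem_of_mem_erase hv)).2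
    have huv : T.Adj u v := htour.adj_of_not_adj (ne_of_mem_erase hv).symm
      fun h => not_adj_of_not_cGood hbad (hsub _ _ h)
    have hB := htour.card_inter_inNbhd_lt_of_max_inDeg hmax huv hBu (notMem_erase u Bad)
    have hN : #(T.inNbhd u ∩ T.outNbhd v) < c :=
      (card_le_card (inter_subset_inter (inNbhd_mono hsub u) (outNbhd_mono hsub v))).trans_lt
        (card_inNbhd_inter_outNbhd_lt_of_not_cGood hbad)
    omega
  have hBad : #Bad - 1 ≤ #B := pred_card_le_card_erase
  obtain hB0 | hBne := B.eq_empty_or_nonempty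
  · rw [hB0, card_empty] at hBad
    omega
  · obtain ⟨v, hv, hdeg⟩ := htour.exists_card_le_two_mul_card_inter_inNbhd_add_one hBne
    have := key v hv
    omega

/-- If T is a spanning tournament of a semicomplete digraph D and
u has maximum in-degree in T, then u is a nearly in-dominating vertex of D. -/
theorem max_in_degree_is_nearly_in_dominating {V : Type} [Fintype V]
    (G T : Digr V) (hsc : G.Semicomplete)
    (hsub : ∀ u v : V, T.Adj u v → G.Adj u v)
    (htour : T.IsTournament)
    (u : V) (hmax : ∀ w : V, T.inDeg w ≤ T.inDeg u) :
    ∀ c : ℕ, Set.ncard {v : V | ¬ G.CGood c v u} ≤ 2 * c :=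
  max_in_degree_is_nearly_in_dominating_general G T hsub htour u hmax
end

section
/- Let l ≥ 2 and f be positive integers, and let D be an l-quasi-transitive digraph that is (2f(l+2)+1)-strong. Then for any two non-adjacent vertices u and v of D, there exist at least f independent paths, each of length at most l + 1, that are all directed from u to v, or at least f independent paths, each of length at most l + 1, that are all directed from v to u. -/
namespace Digr

/-- An l-quasi-transitive digraph: whenever there is a path of length l (i.e. with
l arcs, hence l+1 vertices) from u to v, the vertices u and v are adjacent. -/
def LQuasiTransitive {V : Type} (G : Digr V) (l : ℕ) : Prop :=
  ∀ u v : V, (∃ p : List V, G.IsPathFrom p u v ∧ p.length = l + 1) →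
    (G.Adj u v ∨ G.Adj v u)

/-- A family of paths (with common endpoints) is independent if no path
contains an interior vertex of another. -/
def IndepPaths {V : Type} {n : ℕ} (P : Fin n → List V) : Prop :=
  ∀ i j, i ≠ j → ∀ w ∈ (P i).tail.dropLast, w ∉ P j

end Digr

/-!
Let `x 0, …, x n` be a shortest path from `u` to `v` with `n ≥ l + 2`. Each subpath
`x i, …, x (i + l)` has length `l`, so its ends are adjacent, and a forward arc would shorten the
path: hence `x (i + l) → x i`. In particular `v → x (n - l)`. If `v → x j` with `l < j`, the path
`v, x j, x (j - l), …, x (j - 2)` has length `l`, and `x (j - 2) → v` would again shorten the path,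
so `v → x (j - 2)`. Descending until `j ≤ l` (`j = 0` is excluded as `u, v` are non-adjacent),
`v, x j, …, x l, u` is a `(v, u)`-path of length at most `l + 1`.

Thus whenever `u, v` lie in a strongly connected set there is a short path between them, in one
direction or the other. Removing the interiors of fewer than `2f` such paths removes at most
`(2f - 1) l` vertices, which leaves `D` strong, so `2f - 1` short paths with pairwise disjoint
interiors can be found greedily, and `f` of them have the same direction.
-/

theorem List.exists_sublist_of_forall_or {α : Type*} {P Q : α → Prop} {L : List α}
    (h : ∀ a ∈ L, P a ∨ Q a) {f : ℕ} (hf : 2 * f - 1 ≤ L.length) :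
    (∃ L' : List α, L'.Sublist L ∧ f ≤ L'.length ∧ ∀ a ∈ L', P a) ∨
      (∃ L' : List α, L'.Sublist L ∧ f ≤ L'.length ∧ ∀ a ∈ L', Q a) := by
  classical
  have hsplit := L.length_eq_length_filter_add (fun a => decide (P a))
  by_cases hP : f ≤ (L.filter fun a => decide (P a)).length
  · exact Or.inl ⟨_, List.filter_sublist, hP, fun a ha => by simpa using (List.mem_filter.1 ha).2⟩
  · refine Or.inr ⟨L.filter fun a => !decide (P a), List.filter_sublist, by omega, fun a ha => ?_⟩
    obtain ⟨haL, haP⟩ := List.mem_filter.1 ha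
    exact (h a haL).resolve_left (by simpa using haP)

theorem List.card_toFinset_flatMap_le {α β : Type*} [DecidableEq β] {L : List α}
    {f : α → List β} {c : ℕ} (h : ∀ a ∈ L, (f a).length ≤ c) :
    (L.flatMap f).toFinset.card ≤ L.length * c := by
  refine (List.toFinset_card_le _).trans ?_
  rw [List.length_flatMap, ← smul_eq_mul, ← List.length_map (f := fun a => (f a).length)]
  refine List.sum_le_card_nsmul _ c fun n hn => ?_
  obtain ⟨a, ha, rfl⟩ := List.mem_map.1 hn
  exact h a ha

namespace Digr

variable {V : Type} {G : Digr V}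

section Paths

variable {p q : List V} {a b c d : V}

theorem isPathFrom_singleton (a : V) : G.IsPathFrom [a] a a :=
  ⟨rfl, rfl, List.isChain_singleton a, List.nodup_singleton a⟩

theorem IsPathFrom.cons (hab : G.Adj a b) (ha : a ∉ p) (hp : G.IsPathFrom p b c) :
    G.IsPathFrom (a :: p) a c := by
  obtain ⟨h₁, h₂, h₃, h₄⟩ := hp
  refine ⟨rfl, ?_, List.isChain_cons.2 ⟨fun y hy => ?_, h₃⟩, List.nodup_cons.2 ⟨ha, h₄⟩⟩
  · rw [List.getLast?_cons, h₂]; rfl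
  · rw [h₁, Option.mem_some_iff] at hy
    exact hy ▸ hab

theorem IsPathFrom.append (hp : G.IsPathFrom p a b) (hq : G.IsPathFrom q c d)
    (hbc : G.Adj b c) (hpq : p.Disjoint q) : G.IsPathFrom (p ++ q) a d := by
  obtain ⟨hp₁, hp₂, hp₃, hp₄⟩ := hp
  obtain ⟨hq₁, hq₂, hq₃, hq₄⟩ := hq
  refine ⟨by simp [List.head?_append, hp₁], by simp [List.getLast?_append, hq₂],
    List.isChain_append.2 ⟨hp₃, hq₃, ?_⟩,
    List.nodup_append.2 ⟨hp₄, hq₄, fun x hx y hy hxy => hpq hx (hxy ▸ hy)⟩⟩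
  rw [hp₂, hq₁]
  simpa using hbc

theorem IsPathFrom.eq_cons_append (hp : G.IsPathFrom p a b) (hab : a ≠ b) :
    p = a :: (p.tail.dropLast ++ [b]) := by
  obtain ⟨h₁, h₂, -, -⟩ := hp
  obtain _ | ⟨c, t⟩ := p
  · simp at h₁
  obtain rfl : c = a := by simpa using h₁
  obtain _ | ⟨d, s⟩ := t
  · simp at h₂; exact absurd h₂ hab
  have hb : (d :: s).getLast (List.cons_ne_nil d s) = b := by
    simpa [List.getLast?_eq_some_getLast] using h₂
  simp only [List.tail_cons]
  rw [← hb, List.dropLast_append_getLast]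

theorem IsPathFrom.notMem_interior (hp : G.IsPathFrom p a b) (hab : a ≠ b) :
    a ∉ p.tail.dropLast ∧ b ∉ p.tail.dropLast := by
  have hnd := hp.2.2.2
  rw [hp.eq_cons_append hab, List.nodup_cons, List.nodup_append] at hnd
  exact ⟨fun h => hnd.1 (List.mem_append_left _ h),
    fun h => hnd.2.2.2 b h b (List.mem_singleton_self b) rfl⟩

theorem IsPathFrom.mem_interior_of_mem (hp : G.IsPathFrom p a b) (hab : a ≠ b) {w : V}
    (hw : w ∈ p) (hwa : w ≠ a) (hwb : w ≠ b) : w ∈ p.tail.dropLast := by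
  rw [hp.eq_cons_append hab] at hw
  simpa [hwa, hwb] using hw

end Paths

def slice (x : ℕ → V) (i j : ℕ) : List V :=
  (List.range' i (j + 1 - i)).map x

theorem mem_slice {x : ℕ → V} {i j : ℕ} {w : V} :
    w ∈ slice x i j ↔ ∃ k, i ≤ k ∧ k ≤ j ∧ x k = w := by
  simp only [slice, List.mem_map, List.mem_range'_1]
  exact exists_congr fun k => ⟨fun ⟨hk, hw⟩ => ⟨hk.1, by omega, hw⟩,
    fun ⟨h₁, h₂, hw⟩ => ⟨⟨h₁, by omega⟩, hw⟩⟩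

theorem length_slice (x : ℕ → V) (i j : ℕ) : (slice x i j).length = j + 1 - i := by
  simp [slice]

theorem slice_self (x : ℕ → V) (i : ℕ) : slice x i i = [x i] := by
  simp [slice]

theorem slice_succ (x : ℕ → V) {i j : ℕ} (hij : i ≤ j + 1) :
    slice x i (j + 1) = slice x i j ++ [x (j + 1)] := by
  simp only [slice, show j + 1 + 1 - i = (j + 1 - i) + 1 by omega, List.range'_concat,
    List.map_append, List.map_singleton]
  congr 3
  omega

structure IsGeodesicOn (G : Digr V) (A : Set V) (x : ℕ → V) (n : ℕ) : Prop where
  adj : ∀ i < n, G.Adj (x i) (x (i + 1))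
  injOn : Set.InjOn x (Set.Iic n)
  mem : ∀ i ≤ n, x i ∈ A
  le_length : ∀ p, G.IsPathOn A p (x 0) (x n) → n + 1 ≤ p.length

namespace IsGeodesicOn

variable {A : Set V} {x : ℕ → V} {n : ℕ} (hx : G.IsGeodesicOn A x n)
include hx

theorem eq_iff {i j : ℕ} (hi : i ≤ n) (hj : j ≤ n) : x i = x j ↔ i = j :=
  ⟨fun h => hx.injOn (Set.mem_Iic.2 hi) (Set.mem_Iic.2 hj) h, congrArg x⟩

theorem mem_slice_iff {i j k : ℕ} (hj : j ≤ n) (hk : k ≤ n) :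
    x k ∈ slice x i j ↔ i ≤ k ∧ k ≤ j := by
  rw [mem_slice]
  constructor
  · rintro ⟨m, him, hmj, hm⟩
    obtain rfl : m = k := (hx.eq_iff (by omega) hk).1 hm
    exact ⟨him, hmj⟩
  · rintro ⟨hik, hkj⟩
    exact ⟨k, hik, hkj, rfl⟩

theorem disjoint_slice {i j i' j' : ℕ} (hj : j < i') (hj' : j' ≤ n) :
    (slice x i j).Disjoint (slice x i' j') := by
  intro w hw hw'
  obtain ⟨k, -, hkj, rfl⟩ := mem_slice.1 hw
  obtain ⟨k', hik', hk'j', hk'⟩ := mem_slice.1 hw'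
  have := (hx.eq_iff (by omega) (by omega)).1 hk'
  omega

theorem mem_of_mem_slice {i j : ℕ} (hj : j ≤ n) {w : V} (hw : w ∈ slice x i j) : w ∈ A := by
  obtain ⟨k, -, hkj, rfl⟩ := mem_slice.1 hw
  exact hx.mem k (by omega)

theorem isPathFrom_slice {i j : ℕ} (hij : i ≤ j) (hj : j ≤ n) :
    G.IsPathFrom (slice x i j) (x i) (x j) := by
  induction j, hij using Nat.le_induction with
  | base => simpa only [slice_self] using isPathFrom_singleton (x i)
  | succ j hij ih =>
    rw [slice_succ x (by omega)]
    exact (ih (by omega)).append (isPathFrom_singleton _) (hx.adj j (by omega))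
      (by simpa only [slice_self] using hx.disjoint_slice (i := i) (lt_add_one j) hj)

theorem not_adj_of_add_one_lt {i j : ℕ} (hij : i + 1 < j) (hjn : j ≤ n) :
    ¬ G.Adj (x i) (x j) := by
  intro h
  have hpath := (hx.isPathFrom_slice (Nat.zero_le i) (by omega)).append
    (hx.isPathFrom_slice hjn le_rfl) h (hx.disjoint_slice (by omega) le_rfl)
  have hshort := hx.le_length _ ⟨hpath, fun w hw => (List.mem_append.1 hw).elim
    (hx.mem_of_mem_slice (by omega)) (hx.mem_of_mem_slice le_rfl)⟩
  simp only [List.length_append, length_slice] at hshort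
  omega

theorem adj_add_of_lQuasiTransitive {l : ℕ} (hqt : G.LQuasiTransitive l) (hl : 2 ≤ l)
    {i : ℕ} (hin : i + l ≤ n) : G.Adj (x (i + l)) (x i) :=
  (hqt (x i) (x (i + l)) ⟨slice x i (i + l), hx.isPathFrom_slice (by omega) hin,
    by simp only [length_slice]; omega⟩).resolve_left
    (hx.not_adj_of_add_one_lt (by omega) hin)

theorem adj_sub_two_of_lQuasiTransitive {l : ℕ} (hqt : G.LQuasiTransitive l) (hl : 2 ≤ l)
    {j : ℕ} (hlj : l < j) (hjn : j < n) (hj : G.Adj (x n) (x j)) :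
    G.Adj (x n) (x (j - 2)) := by
  have hback : G.Adj (x j) (x (j - l)) := by
    simpa [Nat.sub_add_cancel hlj.le] using hx.adj_add_of_lQuasiTransitive hqt hl
      (i := j - l) (by omega)
  have hpath : G.IsPathFrom (x n :: x j :: slice x (j - l) (j - 2)) (x n) (x (j - 2)) := by
    refine ((hx.isPathFrom_slice (by omega) (by omega)).cons hback ?_).cons hj ?_
    · rw [hx.mem_slice_iff (by omega) (by omega)]; omega
    · rw [List.mem_cons, hx.mem_slice_iff (by omega) le_rfl, hx.eq_iff le_rfl (by omega)]
      omega
  exact (hqt _ _ ⟨_, hpath, by simp only [List.length_cons, length_slice]; omega⟩).resolve_right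
    (hx.not_adj_of_add_one_lt (by omega) le_rfl)

theorem isPathOn_cons_slice_append {l j : ℕ} (hj0 : 0 < j) (hjl : j ≤ l) (hln : l < n)
    (hj : G.Adj (x n) (x j)) (hl0 : G.Adj (x l) (x 0)) :
    G.IsPathOn A (x n :: (slice x j l ++ [x 0])) (x n) (x 0) := by
  refine ⟨((hx.isPathFrom_slice hjl hln.le).append (isPathFrom_singleton _) hl0 ?_).cons hj ?_,
    ?_⟩
  · simp only [List.disjoint_singleton, hx.mem_slice_iff hln.le (Nat.zero_le n)]
    omega
  · rw [List.mem_append, List.mem_singleton, hx.mem_slice_iff hln.le le_rfl,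
      hx.eq_iff le_rfl (Nat.zero_le n)]
    omega
  · intro w hw
    rw [List.mem_cons, List.mem_append, List.mem_singleton] at hw
    rcases hw with rfl | hw | rfl
    exacts [hx.mem n le_rfl, hx.mem_of_mem_slice hln.le hw, hx.mem 0 (Nat.zero_le n)]

theorem exists_short_reverse_path {l : ℕ} (hqt : G.LQuasiTransitive l) (hl : 2 ≤ l)
    (hln : l < n) (hn0 : ¬ G.Adj (x n) (x 0)) {j : ℕ} (hjn : j < n) (hj : G.Adj (x n) (x j)) :
    ∃ p, G.IsPathOn A p (x n) (x 0) ∧ p.length ≤ l + 2 := by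
  induction j using Nat.strong_induction_on with
  | _ j ih =>
    obtain rfl | hj0 := Nat.eq_zero_or_pos j
    · exact absurd hj hn0
    by_cases hjl : j ≤ l
    · have hl0 := hx.adj_add_of_lQuasiTransitive hqt hl (i := 0) (by omega)
      rw [zero_add] at hl0
      refine ⟨_, hx.isPathOn_cons_slice_append hj0 hjl hln hj hl0, ?_⟩
      simp only [List.length_cons, List.length_append, length_slice, List.length_nil]
      omega
    · exact ih (j - 2) (by omega) (by omega)
        (hx.adj_sub_two_of_lQuasiTransitive hqt hl (by omega) hjn hj)

end IsGeodesicOn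

theorem exists_isGeodesicOn {A : Set V} {u v : V} (h : ∃ p, G.IsPathOn A p u v) :
    ∃ x n, G.IsGeodesicOn A x n ∧ x 0 = u ∧ x n = v := by
  obtain ⟨p, ⟨⟨hhead, hlast, hchain, hnodup⟩, hpA⟩, hmin⟩ :=
    (InvImage.wf List.length wellFounded_lt).has_min {p | G.IsPathOn A p u v} h
  have hpos : 0 < p.length := List.length_pos_iff.2 (by rintro rfl; simp at hhead)
  set x : ℕ → V := fun i => p.getD i u
  have hx : ∀ i (hi : i < p.length), x i = p[i] := fun i hi => List.getD_eq_getElem _ _ hi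
  have hx0 : x 0 = u := by simp [x, List.getD_eq_getElem?_getD, ← List.head?_eq_getElem?, hhead]
  have hxn : x (p.length - 1) = v := by
    simp [x, List.getD_eq_getElem?_getD, ← List.getLast?_eq_getElem?, hlast]
  refine ⟨x, p.length - 1, ⟨fun i hi => ?_, fun i hi j hj hij => ?_, fun i hi => ?_, ?_⟩, hx0, hxn⟩
  · rw [hx i (by omega), hx (i + 1) (by omega)]
    exact List.isChain_iff_getElem.1 hchain i (by omega)
  · rw [Set.mem_Iic] at hi hj
    rw [hx i (by omega), hx j (by omega)] at hij
    exact (hnodup.getElem_inj_iff).1 hij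
  · rw [hx i (by omega)]
    exact hpA _ (List.getElem_mem _)
  · intro q hq
    rw [hx0, hxn] at hq
    have : ¬ q.length < p.length := hmin q hq
    omega

theorem LQuasiTransitive.exists_short_path {l : ℕ} (hqt : G.LQuasiTransitive l) (hl : 2 ≤ l)
    {A : Set V} (hA : G.StronglyConnectedOn A) {u v : V} (hu : u ∈ A) (hv : v ∈ A)
    (huv : u ≠ v) (hvu : ¬ G.Adj v u) :
    ∃ p, (G.IsPathOn A p u v ∨ G.IsPathOn A p v u) ∧ p.length ≤ l + 2 := by
  obtain ⟨x, n, hx, rfl, rfl⟩ := exists_isGeodesicOn (hA _ hu _ hv huv)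
  by_cases hn : n ≤ l + 1
  · refine ⟨slice x 0 n, Or.inl ⟨hx.isPathFrom_slice (Nat.zero_le n) le_rfl,
      fun _ => hx.mem_of_mem_slice le_rfl⟩, ?_⟩
    rw [length_slice]
    omega
  · have hback := hx.adj_add_of_lQuasiTransitive hqt hl (i := n - l) (by omega)
    rw [Nat.sub_add_cancel (by omega)] at hback
    obtain ⟨p, hp, hlen⟩ := hx.exists_short_reverse_path hqt hl (by omega) hvu (by omega) hback
    exact ⟨p, Or.inr hp, hlen⟩

theorem exists_indepPaths_of_pairwise_disjoint {L : List (List V)} {a b : V} (hab : a ≠ b)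
    (hL : ∀ p ∈ L, G.IsPathFrom p a b)
    (hdisj : L.Pairwise fun p q => p.tail.dropLast.Disjoint q.tail.dropLast)
    {f : ℕ} (hf : f ≤ L.length) :
    ∃ P : Fin f → List V, (∀ i, P i ∈ L) ∧ IndepPaths P := by
  refine ⟨fun i => L[(i : ℕ)], fun i => List.getElem_mem _, fun i j hij w hwi hwj => ?_⟩
  have hdij : L[(i : ℕ)].tail.dropLast.Disjoint L[(j : ℕ)].tail.dropLast := by
    rcases lt_or_gt_of_ne (Fin.val_ne_of_ne hij) with h | h
    · exact List.pairwise_iff_getElem.1 hdisj _ _ _ _ h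
    · exact (List.pairwise_iff_getElem.1 hdisj _ _ _ _ h).symm
  have hpi := hL _ (List.getElem_mem (Nat.lt_of_lt_of_le i.2 hf))
  have hpj := hL _ (List.getElem_mem (Nat.lt_of_lt_of_le j.2 hf))
  have hends := hpi.notMem_interior hab
  exact hdij hwi (hpj.mem_interior_of_mem hab hwj (by rintro rfl; exact hends.1 hwi)
    (by rintro rfl; exact hends.2 hwi))

theorem KStrong.exists_short_paths_pairwise_disjoint [Fintype V] {l k : ℕ}
    (hk : G.KStrong k) (hqt : G.LQuasiTransitive l) (hl : 2 ≤ l) {u v : V} (huv : u ≠ v)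
    (hvu : ¬ G.Adj v u) :
    ∀ m, m * l ≤ k → ∃ L : List (List V), L.length = m ∧
      (∀ p ∈ L, (G.IsPathFrom p u v ∧ p.length ≤ l + 2) ∨
        (G.IsPathFrom p v u ∧ p.length ≤ l + 2)) ∧
      L.Pairwise fun p q => p.tail.dropLast.Disjoint q.tail.dropLast
  | 0, _ => ⟨[], rfl, by simp, List.Pairwise.nil⟩
  | m + 1, hm => by
    classical
    obtain ⟨L, hlen, hshort, hdisj⟩ :=
      hk.exists_short_paths_pairwise_disjoint hqt hl huv hvu m
        ((Nat.mul_le_mul_right l m.le_succ).trans hm)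
    set S : Finset V := (L.flatMap fun p => p.tail.dropLast).toFinset
    have hmemS : ∀ w, w ∈ S ↔ ∃ p ∈ L, w ∈ p.tail.dropLast := by simp [S]
    have hS : S.card ≤ k - 1 := by
      have hcard : S.card ≤ L.length * l := List.card_toFinset_flatMap_le (f := fun p : List V => p.tail.dropLast)
        (c := l) fun p hp => by
          rcases hshort p hp with h | h <;>
            · simp only [List.length_dropLast, List.length_tail]; omega
      rw [hlen] at hcard
      rw [add_one_mul] at hm
      omega
    have hends : ∀ p ∈ L, u ∉ p.tail.dropLast ∧ v ∉ p.tail.dropLast := fun p hp =>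
      (hshort p hp).elim (fun h => h.1.notMem_interior huv)
        (fun h => (h.1.notMem_interior huv.symm).symm)
    have hu : u ∈ (S : Set V)ᶜ := fun h => by
      obtain ⟨p, hp, hup⟩ := (hmemS u).1 h
      exact (hends p hp).1 hup
    have hv : v ∈ (S : Set V)ᶜ := fun h => by
      obtain ⟨p, hp, hvp⟩ := (hmemS v).1 h
      exact (hends p hp).2 hvp
    obtain ⟨q, hq, hqlen⟩ := hqt.exists_short_path hl (hk.2 S hS) hu hv huv hvu
    have hqS : ∀ w ∈ q, w ∉ S := fun w hw hwS =>
      hq.elim (fun h => h.2 w hw hwS) (fun h => h.2 w hw hwS)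
    refine ⟨q :: L, by simp [hlen], ?_, List.pairwise_cons.2 ⟨?_, hdisj⟩⟩
    · intro p hp
      rcases List.mem_cons.1 hp with rfl | hp
      · exact hq.imp (fun h => ⟨h.1, hqlen⟩) (fun h => ⟨h.1, hqlen⟩)
      · exact hshort p hp
    · intro p hp w hwq hwp
      exact hqS w (List.tail_subset _ (List.dropLast_subset _ hwq)) ((hmemS w).2 ⟨p, hp, hwp⟩)

end Digr

theorem l_quasi_transitive_independent_paths_general {V : Type} [Fintype V]
    (l f : ℕ) (hl : 2 ≤ l)
    (G : Digr V) (hqt : G.LQuasiTransitive l)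
    (hstrong : G.KStrong (2 * f * (l + 2) + 1))
    (u v : V) (huv : u ≠ v) (hnadj : ¬ G.Adj u v ∧ ¬ G.Adj v u) :
    (∃ P : Fin f → List V,
      (∀ i, G.IsPathFrom (P i) u v ∧ (P i).length ≤ l + 2) ∧ Digr.IndepPaths P) ∨
    (∃ P : Fin f → List V,
      (∀ i, G.IsPathFrom (P i) v u ∧ (P i).length ≤ l + 2) ∧ Digr.IndepPaths P) := by
  have hm : (2 * f - 1) * l ≤ 2 * f * (l + 2) + 1 :=
    calc (2 * f - 1) * l ≤ 2 * f * l := Nat.mul_le_mul_right l (Nat.sub_le _ _)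
      _ ≤ 2 * f * (l + 2) + 1 := Nat.le_succ_of_le (Nat.mul_le_mul_left _ (by omega))
  obtain ⟨L, hlen, hshort, hdisj⟩ :=
    hstrong.exists_short_paths_pairwise_disjoint hqt hl huv hnadj.2 _ hm
  rcases List.exists_sublist_of_forall_or hshort hlen.ge with
    ⟨L', hsub, hf, hL'⟩ | ⟨L', hsub, hf, hL'⟩
  · obtain ⟨P, hPL, hP⟩ := Digr.exists_indepPaths_of_pairwise_disjoint huv
      (fun p hp => (hL' p hp).1) (hdisj.sublist hsub) hf
    exact Or.inl ⟨P, fun i => hL' _ (hPL i), hP⟩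
  · obtain ⟨P, hPL, hP⟩ := Digr.exists_indepPaths_of_pairwise_disjoint huv.symm
      (fun p hp => (hL' p hp).1) (hdisj.sublist hsub) hf
    exact Or.inr ⟨P, fun i => hL' _ (hPL i), hP⟩

/-- Let l ≥ 2, f ≥ 1, and let D be a (2f(l+2)+1)-strong
l-quasi-transitive digraph. For any two non-adjacent vertices u, v there exist
f independent paths of length at most l+1 (hence at most l+2 vertices) all
directed from u to v, or f such paths all directed from v to u. -/
theorem l_quasi_transitive_independent_paths {V : Type} [Fintype V]
    (l f : ℕ) (hl : 2 ≤ l) (hf : 1 ≤ f)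
    (G : Digr V) (hqt : G.LQuasiTransitive l)
    (hstrong : G.KStrong (2 * f * (l + 2) + 1))
    (u v : V) (huv : u ≠ v) (hnadj : ¬ G.Adj u v ∧ ¬ G.Adj v u) :
    (∃ P : Fin f → List V,
      (∀ i, G.IsPathFrom (P i) u v ∧ (P i).length ≤ l + 2) ∧ Digr.IndepPaths P) ∨
    (∃ P : Fin f → List V,
      (∀ i, G.IsPathFrom (P i) v u ∧ (P i).length ≤ l + 2) ∧ Digr.IndepPaths P) :=
  l_quasi_transitive_independent_paths_general l f hl G hqt hstrong u v huv hnadj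
end
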